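/- Let n ≥ 2 and let p be a partial metric on a set X. Define P : X^n → ℝ by P(x_1,…,x_n) = Σ_{t=2}^{n} Σ_{i=1}^{t−1} p(x_i, x_t) (the sum of p over all pairs i < t). Then P is a partial n-Metric on X. -/
import Mathlib


/-- The `n`-tuple with `n − 1` copies of `a` and `b` in the last coordinate. -/
def repl {X : Type*} {n : ℕ} (a b : X) : Fin n → X :=
  fun i => if i.val = n - 1 then b else a

/-- `P` is a partial n-𝔐etric on `X` (for `2 ≤ n`). -/
def IsPartialNMetric {X : Type*} {n : ℕ} (hn : 2 ≤ n) (P : (Fin n → X) → ℝ) : Prop :=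
  (∀ x₁ x₂ : X, P (fun _ => x₁) ≤ P (repl x₁ x₂)) ∧
  (∀ (x : Fin n → X) (σ : Equiv.Perm (Fin n)), P (x ∘ σ) = P x) ∧
  (∀ x₁ x₂ : X,
    (P (repl x₁ x₂) = P (fun _ => x₁) ∧ P (repl x₂ x₁) = P (fun _ => x₂)) ↔ x₁ = x₂) ∧
  (∀ (x : Fin n → X) (a : X),
    P x ≤ P (Function.update x ⟨n - 1, by omega⟩ a) + P (repl a (x ⟨n - 1, by omega⟩))
      - P (fun _ => a))

/-- `p` is a partial metric on `X`. -/
def IsPartialMetric {X : Type*} (p : X → X → ℝ) : Prop :=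
  (∀ x y, p x x ≤ p x y) ∧
  (∀ x y, p x y = p y x) ∧
  (∀ x y, (p x x = p x y ∧ p x y = p y y) ↔ x = y) ∧
  (∀ x y z, p x y ≤ p x z + p z y - p z z)

private lemma aux_sum_if_lt (N m : ℕ) (h : m ≤ N) (c : ℝ) :
    ∑ i ∈ Finset.range N, (if i < m then c else 0) = m * c := by
  rw [← Finset.sum_filter]
  have hf : (Finset.range N).filter (· < m) = Finset.range m := by
    ext i; simp only [Finset.mem_filter, Finset.mem_range]; omega
  rw [hf, Finset.sum_const, Finset.card_range, nsmul_eq_mul]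

private lemma aux_sum_if_lt_fin (n m : ℕ) (h : m ≤ n) (c : ℝ) :
    ∑ i : Fin n, (if i.val < m then c else 0) = m * c := by
  rw [Fin.sum_univ_eq_sum_range (fun i => if i < m then c else 0)]
  exact aux_sum_if_lt n m h c

/-- A partial metric induces a partial n-𝔐etric via the sum of `p` over all pairs `i < t`. -/
theorem partialMetric_induces_partialNMetric {X : Type*} {n : ℕ} (hn : 2 ≤ n)
    (p : X → X → ℝ) (hp : IsPartialMetric p)
    (P : (Fin n → X) → ℝ)
    (hP : ∀ x : Fin n → X,
      P x = ∑ t : Fin n, ∑ i ∈ Finset.univ.filter (fun i : Fin n => i.val < t.val),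
        p (x i) (x t)) :
    IsPartialNMetric hn P := by
  obtain ⟨plb, psym, psep, pinq⟩ := hp
  -- P in `if` form
  have hP' : ∀ x : Fin n → X,
      P x = ∑ t : Fin n, ∑ i : Fin n, (if i.val < t.val then p (x i) (x t) else 0) := by
    intro x
    rw [hP x]
    exact Finset.sum_congr rfl fun t _ => Finset.sum_filter _ _
  -- value on constants
  have hconst : ∀ c : X,
      P (fun _ => c) = (∑ t ∈ Finset.range n, (t : ℝ)) * p c c := by
    intro c
    rw [hP']
    have h1 : ∀ t : Fin n, ∑ i : Fin n, (if i.val < t.val then p c c else 0)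
        = (t.val : ℝ) * p c c := fun t => aux_sum_if_lt_fin n t.val t.isLt.le (p c c)
    rw [Finset.sum_congr rfl fun t _ => h1 t,
      Fin.sum_univ_eq_sum_range (fun t => (t : ℝ) * p c c), ← Finset.sum_mul]
  -- value on repl
  have hrepl : ∀ a b : X,
      P (repl a b) = ((n - 1 : ℕ) : ℝ) * p a b
        + (∑ t ∈ Finset.range (n - 1), (t : ℝ)) * p a a := by
    intro a b
    rw [hP']
    have h1 : ∀ t i : Fin n,
        (if i.val < t.val then p (repl a b i) (repl a b t) else 0)
        = if i.val < t.val then (if t.val = n - 1 then p a b else p a a) else 0 := by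
      intro t i
      have ht := t.isLt
      simp only [repl]
      split_ifs <;> first | rfl | omega
    rw [Finset.sum_congr rfl fun t _ => Finset.sum_congr rfl fun i _ => h1 t i]
    have h2 : ∀ t : Fin n,
        ∑ i : Fin n, (if i.val < t.val then (if t.val = n - 1 then p a b else p a a) else 0)
        = (t.val : ℝ) * (if t.val = n - 1 then p a b else p a a) :=
      fun t => aux_sum_if_lt_fin n t.val t.isLt.le _
    rw [Finset.sum_congr rfl fun t _ => h2 t,
      Fin.sum_univ_eq_sum_range (fun t => (t : ℝ) * (if t = n - 1 then p a b else p a a))]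
    have key := Finset.sum_range_succ
      (fun t => (t : ℝ) * (if t = n - 1 then p a b else p a a)) (n - 1)
    rw [show n - 1 + 1 = n by omega] at key
    rw [key]
    have h3 : ∀ t ∈ Finset.range (n - 1),
        (t : ℝ) * (if t = n - 1 then p a b else p a a) = (t : ℝ) * p a a := by
      intro t ht
      rw [Finset.mem_range] at ht
      rw [if_neg (by omega)]
    rw [Finset.sum_congr rfl h3, if_pos rfl, ← Finset.sum_mul]
    ring
  -- Gauss relation
  have hKn : (∑ t ∈ Finset.range n, (t : ℝ))
      = (∑ t ∈ Finset.range (n - 1), (t : ℝ)) + ((n - 1 : ℕ) : ℝ) := by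
    have key := Finset.sum_range_succ (fun t => (t : ℝ)) (n - 1)
    rw [show n - 1 + 1 = n by omega] at key
    exact key
  set K' : ℝ := ∑ t ∈ Finset.range (n - 1), (t : ℝ) with hK'
  have hn1 : (1 : ℝ) ≤ ((n - 1 : ℕ) : ℝ) := by
    have : 1 ≤ n - 1 := by omega
    exact_mod_cast this
  refine ⟨?_, ?_, ?_, ?_⟩
  · -- lbnd
    intro x₁ x₂
    rw [hconst, hrepl, hKn]
    have := plb x₁ x₂
    nlinarith
  · -- symmetry
    intro x σ
    have key : ∀ y : Fin n → X, 2 * P y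
        = ∑ t : Fin n, ∑ i : Fin n, (if i ≠ t then p (y i) (y t) else 0) := by
      intro y
      have h1 : P y = ∑ t : Fin n, ∑ i : Fin n,
          (if t.val < i.val then p (y i) (y t) else 0) := by
        rw [hP' y, Finset.sum_comm]
        exact Finset.sum_congr rfl fun t _ => Finset.sum_congr rfl fun i _ => by
          split_ifs with h
          · exact psym (y t) (y i)
          · rfl
      have := hP' y
      calc 2 * P y = P y + P y := by ring
        _ = (∑ t : Fin n, ∑ i : Fin n, (if i.val < t.val then p (y i) (y t) else 0))
              + ∑ t : Fin n, ∑ i : Fin n, (if t.val < i.val then p (y i) (y t) else 0) := by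
            rw [← this, ← h1]
        _ = ∑ t : Fin n, ∑ i : Fin n, ((if i.val < t.val then p (y i) (y t) else 0)
              + (if t.val < i.val then p (y i) (y t) else 0)) := by
            rw [← Finset.sum_add_distrib]
            exact Finset.sum_congr rfl fun t _ => (Finset.sum_add_distrib).symm
        _ = ∑ t : Fin n, ∑ i : Fin n, (if i ≠ t then p (y i) (y t) else 0) := by
            refine Finset.sum_congr rfl fun t _ => Finset.sum_congr rfl fun i _ => ?_
            simp only [ne_eq, Fin.ext_iff]
            split_ifs <;> first | ring1 | omega | (exfalso; omega)
    have hQ : ∑ t : Fin n, ∑ i : Fin n, (if i ≠ t then p (x (σ i)) (x (σ t)) else 0)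
        = ∑ t : Fin n, ∑ i : Fin n, (if i ≠ t then p (x i) (x t) else 0) := by
      have step1 : ∀ t : Fin n,
          ∑ i : Fin n, (if i ≠ t then p (x (σ i)) (x (σ t)) else 0)
          = ∑ i : Fin n, (if i ≠ σ t then p (x i) (x (σ t)) else 0) := by
        intro t
        have : ∀ i : Fin n, (if i ≠ t then p (x (σ i)) (x (σ t)) else 0)
            = (if σ i ≠ σ t then p (x (σ i)) (x (σ t)) else 0) := by
          intro i
          simp [σ.injective.ne_iff]
        rw [Finset.sum_congr rfl fun i _ => this i]
        exact Equiv.sum_comp σ (fun j => if j ≠ σ t then p (x j) (x (σ t)) else 0)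
      rw [Finset.sum_congr rfl fun t _ => step1 t]
      exact Equiv.sum_comp σ (fun s => ∑ i : Fin n, (if i ≠ s then p (x i) (x s) else 0))
    have k1 := key (x ∘ σ)
    have k2 := key x
    simp only [Function.comp] at k1
    rw [hQ] at k1
    linarith
  · -- separation
    intro x₁ x₂
    constructor
    · rintro ⟨h1, h2⟩
      rw [hconst, hrepl, hKn] at h1 h2
      have e1 : p x₁ x₂ = p x₁ x₁ := by
        have : ((n - 1 : ℕ) : ℝ) * p x₁ x₂ = ((n - 1 : ℕ) : ℝ) * p x₁ x₁ := by linarith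
        have hne : ((n - 1 : ℕ) : ℝ) ≠ 0 := by linarith
        exact mul_left_cancel₀ hne this
      have e2 : p x₂ x₁ = p x₂ x₂ := by
        have : ((n - 1 : ℕ) : ℝ) * p x₂ x₁ = ((n - 1 : ℕ) : ℝ) * p x₂ x₂ := by linarith
        have hne : ((n - 1 : ℕ) : ℝ) ≠ 0 := by linarith
        exact mul_left_cancel₀ hne this
      exact (psep x₁ x₂).mp ⟨e1.symm, (psym x₁ x₂).trans e2⟩
    · rintro rfl
      have : repl (n := n) x₁ x₁ = fun _ => x₁ := by
        funext i; simp [repl]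
      rw [this]
      exact ⟨rfl, rfl⟩
  · -- triangle
    intro x a
    set m : Fin n := ⟨n - 1, by omega⟩ with hm
    have hmval : m.val = n - 1 := rfl
    -- decomposition of P
    have hdec : ∀ y : Fin n → X, P y
        = (∑ t : Fin n, ∑ i : Fin n,
            (if i.val < t.val ∧ t.val ≠ n - 1 then p (y i) (y t) else 0))
          + ∑ i : Fin n, (if i.val < n - 1 then p (y i) (y m) else 0) := by
      intro y
      rw [hP' y]
      have hsplit : ∀ t i : Fin n,
          (if i.val < t.val then p (y i) (y t) else 0)
          = (if i.val < t.val ∧ t.val ≠ n - 1 then p (y i) (y t) else 0)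
            + (if i.val < t.val ∧ t.val = n - 1 then p (y i) (y t) else 0) := by
        intro t i
        split_ifs <;> first | ring1 | omega | (exfalso; omega)
      rw [Finset.sum_congr rfl fun t _ => Finset.sum_congr rfl fun i _ => hsplit t i]
      have : ∀ t : Fin n, ∑ i : Fin n,
          ((if i.val < t.val ∧ t.val ≠ n - 1 then p (y i) (y t) else 0)
            + (if i.val < t.val ∧ t.val = n - 1 then p (y i) (y t) else 0))
          = (∑ i : Fin n, (if i.val < t.val ∧ t.val ≠ n - 1 then p (y i) (y t) else 0))
            + ∑ i : Fin n, (if i.val < t.val ∧ t.val = n - 1 then p (y i) (y t) else 0) :=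
        fun t => Finset.sum_add_distrib
      rw [Finset.sum_congr rfl fun t _ => this t, Finset.sum_add_distrib]
      congr 1
      -- second sum: only t = m contributes
      rw [Finset.sum_eq_single_of_mem m (Finset.mem_univ m)]
      · refine Finset.sum_congr rfl fun i _ => ?_
        have hiff : (i.val < m.val ∧ m.val = n - 1) ↔ i.val < n - 1 := by
          rw [hmval]; tauto
        exact if_congr hiff rfl rfl
      · intro t _ htm
        refine Finset.sum_eq_zero fun i _ => ?_
        have : t.val ≠ n - 1 := fun h => htm (Fin.ext (h.trans hmval.symm))
        rw [if_neg (by tauto)]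
    -- the three pieces
    have hy : x ⟨n - 1, by omega⟩ = x m := rfl
    have hupd : P (Function.update x m a)
        = (∑ t : Fin n, ∑ i : Fin n,
            (if i.val < t.val ∧ t.val ≠ n - 1 then p (x i) (x t) else 0))
          + ∑ i : Fin n, (if i.val < n - 1 then p (x i) a else 0) := by
      rw [hdec]
      congr 1
      · refine Finset.sum_congr rfl fun t _ => Finset.sum_congr rfl fun i _ => ?_
        split_ifs with h
        · have ht := t.isLt
          have hti : t ≠ m := fun he => h.2 (by rw [he])
          have hii : i ≠ m := by
            intro he
            have : i.val = n - 1 := by rw [he]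
            omega
          rw [Function.update_of_ne hti, Function.update_of_ne hii]
        · rfl
      · refine Finset.sum_congr rfl fun i _ => ?_
        split_ifs with h
        · have hii : i ≠ m := by
            intro he
            have : i.val = n - 1 := by rw [he]
            omega
          rw [Function.update_of_ne hii, Function.update_self]
        · rfl
    rw [hdec x, hupd, hrepl, hconst, hKn, hy]
    have hcount : ∀ c : ℝ, ((n - 1 : ℕ) : ℝ) * c
        = ∑ i : Fin n, (if i.val < n - 1 then c else 0) :=
      fun c => (aux_sum_if_lt_fin n (n - 1) (by omega) c).symm
    have hmain : ∑ i : Fin n, (if i.val < n - 1 then p (x i) (x m) else 0)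
        ≤ (∑ i : Fin n, (if i.val < n - 1 then p (x i) a else 0))
          + ∑ i : Fin n, (if i.val < n - 1 then (p a (x m) - p a a) else 0) := by
      rw [← Finset.sum_add_distrib]
      refine Finset.sum_le_sum fun i _ => ?_
      split_ifs with h
      · have := pinq (x i) (x m) a
        linarith
      · simp
    rw [← hcount] at hmain
    have expand : ((n - 1 : ℕ) : ℝ) * (p a (x m) - p a a)
        = ((n - 1 : ℕ) : ℝ) * p a (x m) - ((n - 1 : ℕ) : ℝ) * p a a := by ring
    linarith [hmain, expand.le]
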